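/- Let w, u be words with |u| = m ≤ |w| = n and δ ≥ 0 an integer. Define a sequence by a_0 = m (position in w-window), b_0 = m (position in u), and iteratively h_k = max{ h : w-window suffix of length h ending at a_k equals suffix of u of length h ending at b_k }, with a_{k+1} = a_k − h_k − 1, b_{k+1} = b_k − h_k − 1 while b_k − h_k > 0. Then the number of completed iterations before reaching b = 0 equals d_H(u, w-window), and truncating the process after δ+1 mismatches computes min(δ+1, d_H(u, w-window)). -/

import Mathlib

/-!
Reading both words from the right, the longest common suffix is free of mismatches and the
letter just before it is a mismatch, so every jump of the kangaroo removes exactly one unit of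
Hamming distance, and the process stops exactly when the remaining prefixes agree. So with
fuel `f` it computes `min f (hdist u v)`, and the Hamming distance never exceeds the length.
-/

/-- Hamming distance between equal-length words, as lists. -/
def hdist {σ : Type*} [DecidableEq σ] (u v : List σ) : ℕ :=
  ((List.zip u v).filter fun p => p.1 ≠ p.2).length

/-- Length of the longest common prefix of two words. -/
def lcpLen {σ : Type*} [DecidableEq σ] : List σ → List σ → ℕ
  | a :: u, b :: v => if a = b then lcpLen u v + 1 else 0
  | _, _ => 0

/-- Length of the longest common suffix of two words. -/
def lcsLen {σ : Type*} [DecidableEq σ] (u v : List σ) : ℕ :=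
  lcpLen u.reverse v.reverse

/-- The kangaroo-jump process: scan mismatches from right to left, jumping over the
longest common suffix in each iteration; count completed iterations. The first argument
is fuel bounding the number of iterations. -/
def kangaroo {σ : Type*} [DecidableEq σ] : ℕ → List σ → List σ → ℕ
  | 0, _, _ => 0
  | fuel + 1, u, v =>
      if lcsLen u v = u.length then 0
      else 1 + kangaroo fuel (u.take (u.length - lcsLen u v - 1))
                             (v.take (v.length - lcsLen u v - 1))

/-- The kangaroo-jump process truncated after b counted mismatches. -/
def kangarooTr {σ : Type*} [DecidableEq σ] : ℕ → ℕ → List σ → List σ → ℕ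
  | 0, _, _, _ => 0
  | fuel + 1, b, u, v =>
      if lcsLen u v = u.length then 0
      else if b ≤ 1 then 1
      else 1 + kangarooTr fuel (b - 1) (u.take (u.length - lcsLen u v - 1))
                                       (v.take (v.length - lcsLen u v - 1))

section

variable {σ : Type*} [DecidableEq σ]

theorem hdist_le_length_left (u v : List σ) : hdist u v ≤ u.length :=
  (List.length_filter_le _ _).trans (by simp [List.length_zip])

theorem hdist_self : ∀ u : List σ, hdist u u = 0
  | [] => rfl
  | a :: u => by simpa [hdist] using hdist_self u

theorem hdist_reverse {u v : List σ} (hl : u.length = v.length) :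
    hdist u.reverse v.reverse = hdist u v := by
  rw [hdist, hdist, show u.reverse.zip v.reverse = (u.zip v).reverse from
    (List.reverse_zipWith hl).symm, List.filter_reverse, List.length_reverse]

theorem lcpLen_le_length_left : ∀ r s : List σ, lcpLen r s ≤ r.length
  | [], _ => by simp [lcpLen]
  | _ :: _, [] => by simp [lcpLen]
  | a :: r, b :: s => by
      by_cases h : a = b
      · simpa [lcpLen, h] using lcpLen_le_length_left r s
      · simp [lcpLen, h]

theorem eq_of_lcpLen_eq_length : ∀ {r s : List σ}, r.length = s.length →
    lcpLen r s = r.length → r = s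
  | [], [], _, _ => rfl
  | a :: r, b :: s, hl, h => by
      by_cases hab : a = b
      · subst hab
        simp only [lcpLen, if_pos, List.length_cons, Nat.add_right_cancel_iff] at h hl
        rw [eq_of_lcpLen_eq_length hl h]
      · simp [lcpLen, hab] at h

theorem hdist_eq_hdist_drop_lcpLen_add_one : ∀ {r s : List σ}, r.length = s.length →
    lcpLen r s < r.length →
    hdist r s = hdist (r.drop (lcpLen r s + 1)) (s.drop (lcpLen r s + 1)) + 1
  | [], _, _, h => by simp [lcpLen] at h
  | _ :: _, [], hl, _ => by simp at hl
  | a :: r, b :: s, hl, h => by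
      simp only [List.length_cons, Nat.add_right_cancel_iff] at hl
      by_cases hab : a = b
      · subst hab
        simp only [lcpLen, if_pos, List.length_cons, Nat.add_lt_add_iff_right] at h ⊢
        simpa [hdist] using hdist_eq_hdist_drop_lcpLen_add_one hl h
      · simp [lcpLen, hab, hdist]

theorem eq_of_lcsLen_eq_length {u v : List σ} (hl : u.length = v.length)
    (h : lcsLen u v = u.length) : u = v :=
  List.reverse_injective <|
    eq_of_lcpLen_eq_length (by simp [hl]) (by simpa [lcsLen] using h)

theorem lcsLen_le_length_left (u v : List σ) : lcsLen u v ≤ u.length := by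
  simpa [lcsLen] using lcpLen_le_length_left u.reverse v.reverse

theorem hdist_eq_hdist_take_add_one {u v : List σ} (hl : u.length = v.length)
    (h : lcsLen u v < u.length) :
    hdist u v = hdist (u.take (u.length - lcsLen u v - 1))
      (v.take (v.length - lcsLen u v - 1)) + 1 := by
  rw [← hdist_reverse hl, ← hdist_reverse (u := u.take _) (v := v.take _) (by simp [hl]),
    List.reverse_take, List.reverse_take,
    show u.length - (u.length - lcsLen u v - 1) = lcsLen u v + 1 by omega,
    show v.length - (v.length - lcsLen u v - 1) = lcsLen u v + 1 by omega]
  exact hdist_eq_hdist_drop_lcpLen_add_one (by simp [hl]) (by simpa [lcsLen] using h)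

theorem kangaroo_eq_min_hdist : ∀ (fuel : ℕ) {u v : List σ}, u.length = v.length →
    kangaroo fuel u v = min fuel (hdist u v)
  | 0, _, _, _ => by simp [kangaroo]
  | fuel + 1, u, v, hl => by
      rw [kangaroo]
      split_ifs with h
      · simp [eq_of_lcsLen_eq_length hl h, hdist_self]
      · have hlt := lt_of_le_of_ne (lcsLen_le_length_left u v) h
        rw [kangaroo_eq_min_hdist fuel (by simp [hl]), hdist_eq_hdist_take_add_one hl hlt]
        omega

theorem kangarooTr_eq_min_kangaroo : ∀ (fuel : ℕ) {b : ℕ} (u v : List σ), 1 ≤ b →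
    kangarooTr fuel b u v = min b (kangaroo fuel u v)
  | 0, _, _, _, _ => by simp [kangarooTr, kangaroo]
  | fuel + 1, b, u, v, hb => by
      rw [kangarooTr, kangaroo]
      split_ifs with h hb₁
      · simp
      · omega
      · rw [kangarooTr_eq_min_kangaroo fuel _ _ (by omega)]
        omega

end

theorem stmt19_general {σ : Type*} [DecidableEq σ] (w u : List σ) (m n i δ : ℕ)
    (hm : u.length = m) (hn : w.length = n)
    (hi₁ : m ≤ i) (hi₂ : i ≤ n) :
    kangaroo m u ((w.drop (i - m)).take m) = hdist u ((w.drop (i - m)).take m) ∧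
    kangarooTr m (δ + 1) u ((w.drop (i - m)).take m) =
      min (δ + 1) (hdist u ((w.drop (i - m)).take m)) := by
  set window := (w.drop (i - m)).take m
  have hwindow : u.length = window.length := by simp [window, hn, hm]; omega
  have hcount : kangaroo m u window = hdist u window := by
    rw [kangaroo_eq_min_hdist m hwindow, ← hm]
    exact min_eq_right (hdist_le_length_left u window)
  exact ⟨hcount, hcount ▸ kangarooTr_eq_min_kangaroo m u window (Nat.succ_pos δ)⟩

/-- Correctness of the kangaroo-jump technique on a window of w: the number of completed
iterations equals the Hamming distance between u and the window, and the process
truncated after δ+1 counted mismatches computes min(δ+1, d_H(u, window)). -/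
theorem stmt19 {σ : Type*} [DecidableEq σ] (w u : List σ) (m n i δ : ℕ)
    (hm : u.length = m) (hn : w.length = n) (hmn : m ≤ n)
    (hi₁ : m ≤ i) (hi₂ : i ≤ n) :
    kangaroo m u ((w.drop (i - m)).take m) = hdist u ((w.drop (i - m)).take m) ∧
    kangarooTr m (δ + 1) u ((w.drop (i - m)).take m) =
      min (δ + 1) (hdist u ((w.drop (i - m)).take m)) :=
  stmt19_general w u m n i δ hm hn hi₁ hi₂
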